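/- Let K be an infinite field of characteristic different from 2 and 3, let n ≥ 3, and let F₂ be the free associative unital K-algebra on two generators x, y. Then [x, y]^{n-2} does NOT belong to T^{(n)}(F₂); consequently the nilpotency index of the commutator of the free generators in F₂/T^{(n)}(F₂) equals n−1. -/

import Mathlib

/-- The right-normed commutator: `rnComm a [b₁, …, b_k] = [a, b₁, …, b_k]`,
where `[u, v] = u * v - v * u`. -/
def rnComm {A : Type*} [Ring A] : A → List A → A
  | a, [] => a
  | a, b :: l => rnComm (a * b - b * a) l

/-- `Tideal A m` is the two-sided ideal `T⁽ᵐ⁾(A)` of `A` generated by all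
right-normed commutators `[a₁, …, a_m]` of length `m`. -/
def Tideal (A : Type*) [Ring A] (m : ℕ) : TwoSidedIdeal A :=
  TwoSidedIdeal.span { x | ∃ (a : A) (l : List A), l.length + 1 = m ∧ rnComm a l = x }

/-!
Write `c = [x, y]`. For the lower bound, let `F₂` act on `C[u]`, `C = K[t]/(t^(n-1))`, with `x`
acting as multiplication by `u` and `y` as `t · d/du`. Then `c` acts as the central scalar `-t`
and the image is commutative modulo `t`, so every commutator of length `n` acts as a multiple of
`t^(n-1) = 0`, while `c^(n-2)` acts as `(-t)^(n-2) ≠ 0`.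

For the upper bound, let `M_j` be the left ideal generated by `T⁽ⁿ⁾` and the commutators
`[w, x_i]` with `w` having `j + 1` brackets. Downward induction on `j` shows that commutators with
`j + 1` brackets are central modulo `M_j`, so `M_j` is two-sided. Expanding `[[u, a²], x_i]`
then gives `2 [u, a] [a, x_i] ∈ M_j`; halving yields `[u, z] c ∈ M_j` for `u` with `j` brackets,
whence `c M_j ⊆ M_{j+1}`. As `c² ∈ M_0` and `M_{n-3} ⊆ T⁽ⁿ⁾`, we get `c^(n-1) ∈ T⁽ⁿ⁾`.
-/

open FreeAlgebra Polynomial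

attribute [local instance] LieRing.ofAssociativeRing

section RightNormed

variable {A : Type*} [Ring A]

theorem rnComm_cons (a b : A) (l : List A) : rnComm a (b :: l) = rnComm ⁅a, b⁆ l := rfl

theorem rnComm_append (a : A) (l₁ l₂ : List A) :
    rnComm a (l₁ ++ l₂) = rnComm (rnComm a l₁) l₂ := by
  induction l₁ generalizing a with
  | nil => rfl
  | cons b l ih => exact ih _

theorem map_rnComm {B : Type*} [Ring B] (f : A →+* B) (a : A) (l : List A) :
    f (rnComm a l) = rnComm (f a) (l.map f) := by
  induction l generalizing a with
  | nil => rfl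
  | cons b l ih => simp only [rnComm_cons, ih, List.map_cons, Ring.lie_def, map_sub, map_mul]

theorem Tideal_le_ker {B : Type*} [Ring B] (f : A →+* B) {m : ℕ}
    (h : ∀ (a : A) (l : List A), l.length + 1 = m → f (rnComm a l) = 0) :
    Tideal A m ≤ TwoSidedIdeal.ker f :=
  TwoSidedIdeal.span_le.mpr <| by
    rintro _ ⟨a, l, hl, rfl⟩
    exact (TwoSidedIdeal.mem_ker f).mpr (h a l hl)

/-- Right-normed commutators with `k` brackets, i.e. of length `k + 1`. -/
def rnComms (A : Type*) [Ring A] (k : ℕ) : Set A :=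
  {v | ∃ a l, l.length = k ∧ rnComm a l = v}

theorem mem_rnComms_zero (a : A) : a ∈ rnComms A 0 := ⟨a, [], rfl, rfl⟩

theorem lie_mem_rnComms {k : ℕ} {v : A} (hv : v ∈ rnComms A k) (b : A) :
    ⁅v, b⁆ ∈ rnComms A (k + 1) := by
  obtain ⟨a, l, rfl, rfl⟩ := hv
  exact ⟨a, l ++ [b], by simp, by rw [rnComm_append]; rfl⟩

theorem rnComms_antitone : Antitone (rnComms A) := by
  rintro j k hjk _ ⟨a, l, rfl, rfl⟩
  refine ⟨rnComm a (l.take (l.length - j)), l.drop (l.length - j), by simp; omega, ?_⟩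
  rw [← rnComm_append, List.take_append_drop]

theorem rnComms_subset_Tideal {k n : ℕ} (hn : n ≠ 0) (hk : n ≤ k + 1) :
    rnComms A k ⊆ Tideal A n := by
  intro v hv
  obtain ⟨a, l, hl, rfl⟩ := rnComms_antitone (show n - 1 ≤ k by omega) hv
  exact TwoSidedIdeal.subset_span ⟨a, l, by omega, rfl⟩

theorem exists_rnComm_eq_pow_mul {S : Set A} {t : A} (ht : ∀ a, Commute t a)
    (hS : ∀ p ∈ S, ∀ q ∈ S, ∃ r ∈ S, ⁅p, q⁆ = t * r) {a : A} (ha : a ∈ S) {l : List A}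
    (hl : ∀ b ∈ l, b ∈ S) : ∃ r ∈ S, rnComm a l = t ^ l.length * r := by
  suffices ∀ k, ∀ r ∈ S, ∃ r' ∈ S, rnComm (t ^ k * r) l = t ^ (k + l.length) * r' by
    simpa using this 0 a ha
  induction l with
  | nil => exact fun k r hr => ⟨r, hr, rfl⟩
  | cons b l ih =>
    intro k r hr
    obtain ⟨r₁, hr₁, hrb⟩ := hS r hr b (hl b List.mem_cons_self)
    have hlie : ⁅t ^ k * r, b⁆ = t ^ (k + 1) * r₁ := by
      rw [pow_succ, mul_assoc, ← hrb, Ring.lie_def, Ring.lie_def, mul_sub, mul_assoc,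
        ← mul_assoc b, ← ((ht b).pow_left k).eq, mul_assoc]
    obtain ⟨r', hr', h⟩ := ih (fun c hc => hl c (List.mem_cons_of_mem _ hc)) (k + 1) r₁ hr₁
    exact ⟨r', hr', by rw [rnComm_cons, hlie, h, List.length_cons, add_assoc, add_comm 1]⟩

end RightNormed

section Adjoin

variable {R A : Type*} [CommRing R] [Ring A] [Algebra R A] {s : Set A} {t : A}

theorem exists_lie_eq_mul_of_mem_adjoin_of_forall (ht : ∀ a, Commute t a) {p : A}
    (hps : ∀ g ∈ s, ∃ r ∈ Algebra.adjoin R s, ⁅p, g⁆ = t * r) {q : A}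
    (hq : q ∈ Algebra.adjoin R s) : ∃ r ∈ Algebra.adjoin R s, ⁅p, q⁆ = t * r := by
  induction hq using Algebra.adjoin_induction with
  | mem g hg => exact hps g hg
  | algebraMap c =>
    exact ⟨0, zero_mem _, by rw [mul_zero, (Algebra.commute_algebraMap_right c p).lie_eq]⟩
  | add q₁ q₂ _ _ h₁ h₂ =>
    obtain ⟨r₁, hr₁, e₁⟩ := h₁
    obtain ⟨r₂, hr₂, e₂⟩ := h₂
    exact ⟨r₁ + r₂, add_mem hr₁ hr₂, by rw [lie_add, e₁, e₂, mul_add]⟩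
  | mul q₁ q₂ hq₁ hq₂ h₁ h₂ =>
    obtain ⟨r₁, hr₁, e₁⟩ := h₁
    obtain ⟨r₂, hr₂, e₂⟩ := h₂
    refine ⟨r₁ * q₂ + q₁ * r₂, add_mem (mul_mem hr₁ hq₂) (mul_mem hq₁ hr₂), ?_⟩
    have leibniz : ⁅p, q₁ * q₂⁆ = ⁅p, q₁⁆ * q₂ + q₁ * ⁅p, q₂⁆ := by
      simp only [Ring.lie_def]; noncomm_ring
    rw [leibniz, e₁, e₂, mul_add, ← mul_assoc q₁, ← (ht q₁).eq, mul_assoc, mul_assoc]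

theorem exists_lie_eq_mul_of_mem_adjoin (ht : ∀ a, Commute t a)
    (hs : ∀ g ∈ s, ∀ h ∈ s, ∃ r ∈ Algebra.adjoin R s, ⁅g, h⁆ = t * r) {p q : A}
    (hp : p ∈ Algebra.adjoin R s) (hq : q ∈ Algebra.adjoin R s) :
    ∃ r ∈ Algebra.adjoin R s, ⁅p, q⁆ = t * r := by
  refine exists_lie_eq_mul_of_mem_adjoin_of_forall ht (fun g hg => ?_) hq
  obtain ⟨r, hr, e⟩ := exists_lie_eq_mul_of_mem_adjoin_of_forall ht (hs g hg) hp
  exact ⟨-r, neg_mem hr, by rw [← lie_skew, e, mul_neg]⟩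

end Adjoin

section PolyRep

variable (R : Type*) [CommRing R] {C : Type*} [CommRing C] [Algebra R C]

noncomputable def polyRep (t : C) : FreeAlgebra R (Fin 2) →ₐ[R] Module.End C C[X] :=
  lift R ![LinearMap.mulLeft C X, t • derivative]

variable {R}

theorem lie_mulLeft_X_smul_derivative (t : C) :
    ⁅LinearMap.mulLeft C (X : C[X]), t • derivative⁆ = -algebraMap C (Module.End C C[X]) t := by
  refine LinearMap.ext fun f => ?_
  simp [Ring.lie_def, derivative_mul]

theorem exists_polyRep_rnComm_eq_pow_mul (t : C) (a : FreeAlgebra R (Fin 2))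
    (l : List (FreeAlgebra R (Fin 2))) :
    ∃ c, polyRep R t (rnComm a l) = algebraMap C _ t ^ l.length * polyRep R t c := by
  set s : Set (Module.End C C[X]) := Set.range ![LinearMap.mulLeft C X, t • derivative]
  have hrange : ∀ b, polyRep R t b ∈ Algebra.adjoin R s := fun b => by
    rw [Algebra.adjoin_range_eq_range_freeAlgebra_lift]; exact ⟨b, rfl⟩
  have hcentral : ∀ g, Commute (algebraMap C (Module.End C C[X]) t) g := Algebra.commutes t
  have hs : ∀ g ∈ s, ∀ h ∈ s, ∃ r ∈ Algebra.adjoin R s, ⁅g, h⁆ = algebraMap C _ t * r := by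
    have hlie := lie_mulLeft_X_smul_derivative t
    simp only [s, Matrix.range_cons_cons_empty, Set.mem_insert_iff, Set.mem_singleton_iff]
    rintro g (rfl | rfl) h (rfl | rfl)
    · exact ⟨0, zero_mem _, by rw [lie_self, mul_zero]⟩
    · exact ⟨-1, neg_mem (one_mem _),
        hlie.trans (mul_neg_one (algebraMap C (Module.End C C[X]) t)).symm⟩
    · exact ⟨1, one_mem _, by rw [← lie_skew, hlie, neg_neg, mul_one]⟩
    · exact ⟨0, zero_mem _, by rw [lie_self, mul_zero]⟩
  obtain ⟨r, hr, e⟩ := exists_rnComm_eq_pow_mul hcentral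
    (fun p hp q hq => exists_lie_eq_mul_of_mem_adjoin hcentral hs hp hq) (hrange a)
    (l := l.map (polyRep R t)) (by simpa using fun b _ => hrange b)
  rw [Algebra.adjoin_range_eq_range_freeAlgebra_lift] at hr
  obtain ⟨c, rfl⟩ := hr
  refine ⟨c, ?_⟩
  rw [← List.length_map (polyRep R t)]
  exact (map_rnComm (polyRep R t).toRingHom a l).trans e

theorem polyRep_eq_zero_of_mem_Tideal {t : C} {m : ℕ} (ht : t ^ m = 0)
    {v : FreeAlgebra R (Fin 2)} (hv : v ∈ Tideal (FreeAlgebra R (Fin 2)) (m + 1)) :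
    polyRep R t v = 0 := by
  refine (TwoSidedIdeal.mem_ker _).mp <|
    Tideal_le_ker (polyRep R t).toRingHom (fun a l hl => ?_) hv
  obtain ⟨c, hc⟩ := exists_polyRep_rnComm_eq_pow_mul t a l
  simp [hc, show l.length = m by omega, ← map_pow, ht]

end PolyRep

theorem comm_pow_not_mem_Tideal_add_two {R : Type*} [CommRing R] [Nontrivial R] (k : ℕ) :
    ⁅ι R (0 : Fin 2), ι R 1⁆ ^ k ∉ Tideal (FreeAlgebra R (Fin 2)) (k + 2) := by
  set t : R[X] ⧸ Ideal.span {(X : R[X]) ^ (k + 1)} := Ideal.Quotient.mk _ X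
  have ht : t ^ (k + 1) = 0 := by
    rw [← map_pow, Ideal.Quotient.eq_zero_iff_mem]; exact Ideal.mem_span_singleton_self _
  have htk : t ^ k ≠ 0 := by
    rw [← map_pow, Ne, Ideal.Quotient.eq_zero_iff_mem, Ideal.mem_span_singleton, X_pow_dvd_iff]
    push Not
    exact ⟨k, k.lt_succ_self, by simp⟩
  have himage :
      polyRep R t (⁅ι R (0 : Fin 2), ι R 1⁆ ^ k) = algebraMap _ (Module.End _ _) ((-t) ^ k) := by
    rw [map_pow, Ring.lie_def, map_sub, map_mul, map_mul, ← Ring.lie_def]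
    simp [polyRep, lie_mulLeft_X_smul_derivative]
  intro h
  have h0 := LinearMap.congr_fun (himage.symm.trans (polyRep_eq_zero_of_mem_Tideal ht h)) 1
  rw [Module.algebraMap_end_apply, smul_eq_C_mul, mul_one, LinearMap.zero_apply, C_eq_zero,
    neg_pow t k, (isUnit_neg_one.pow k).mul_right_eq_zero] at h0
  exact htk h0

section UpperBound

variable (R : Type*) [CommRing R] (n : ℕ)

local notation "F₂" => FreeAlgebra R (Fin 2)
local notation "x" => ι R (0 : Fin 2)
local notation "y" => ι R (1 : Fin 2)

/-- The left ideal `M_j`. -/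
def commIdeal (j : ℕ) : Submodule F₂ F₂ :=
  Submodule.span F₂ ({v | ∃ w ∈ rnComms F₂ (j + 1), ∃ i, v = ⁅w, ι R i⁆} ∪ Tideal F₂ n)

def CentralModulo (j : ℕ) : Prop :=
  ∀ w ∈ rnComms F₂ (j + 1), ∀ z : F₂, ⁅w, z⁆ ∈ commIdeal R n j

variable {R n}

theorem lie_ι_mem_commIdeal {j : ℕ} {w : F₂} (hw : w ∈ rnComms F₂ (j + 1)) (i : Fin 2) :
    ⁅w, ι R i⁆ ∈ commIdeal R n j :=
  Submodule.subset_span (Or.inl ⟨w, hw, i, rfl⟩)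

theorem mem_commIdeal_of_mem_Tideal {j : ℕ} {v : F₂} (hv : v ∈ Tideal F₂ n) :
    v ∈ commIdeal R n j :=
  Submodule.subset_span (Or.inr hv)

theorem commIdeal_succ_le (j : ℕ) : commIdeal R n (j + 1) ≤ commIdeal R n j :=
  Submodule.span_mono <| Set.union_subset_union_left _ fun _ ⟨w, hw, i, hv⟩ =>
    ⟨w, rnComms_antitone (Nat.le_succ _) hw, i, hv⟩

theorem commIdeal_le_Tideal {j : ℕ} (hj : j + 3 = n) {v : F₂} (hv : v ∈ commIdeal R n j) :
    v ∈ Tideal F₂ n := by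
  refine (Submodule.span_le (p := (Tideal F₂ n).asIdeal)).mpr ?_ hv
  rintro _ (⟨w, hw, i, rfl⟩ | h)
  · exact rnComms_subset_Tideal (by omega) (by omega) (lie_mem_rnComms hw _)
  · exact h

theorem CentralModulo.mul_mem {j : ℕ} (hC : CentralModulo R n j) {v : F₂}
    (hv : v ∈ commIdeal R n j) (r : F₂) : v * r ∈ commIdeal R n j := by
  induction hv using Submodule.span_induction with
  | mem v hv =>
    rcases hv with ⟨w, hw, i, rfl⟩ | hv
    · rw [show ⁅w, ι R i⁆ * r = r * ⁅w, ι R i⁆ + ⁅⁅w, ι R i⁆, r⁆ from (add_sub_cancel _ _).symm]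
      exact add_mem (Submodule.smul_mem _ r (lie_ι_mem_commIdeal hw i))
        (hC _ (rnComms_antitone (Nat.le_succ _) (lie_mem_rnComms hw _)) r)
    · exact mem_commIdeal_of_mem_Tideal (TwoSidedIdeal.mul_mem_right _ _ _ hv)
  | zero => rw [zero_mul]; exact zero_mem _
  | add v₁ v₂ _ _ h₁ h₂ => rw [add_mul]; exact add_mem h₁ h₂
  | smul a v _ h => rw [smul_eq_mul, mul_assoc]; exact Submodule.smul_mem _ a h

theorem centralModulo_of_le {j : ℕ} (hn : n ≠ 0) (hj : n ≤ j + 2) : CentralModulo R n j := by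
  intro w hw z
  have hwT := rnComms_subset_Tideal hn (by omega) hw
  rw [Ring.lie_def]
  exact mem_commIdeal_of_mem_Tideal
    (sub_mem (TwoSidedIdeal.mul_mem_right _ _ _ hwT) (TwoSidedIdeal.mul_mem_left _ _ _ hwT))

theorem CentralModulo.of_succ {j : ℕ} (hC : CentralModulo R n (j + 1)) : CentralModulo R n j := by
  intro w hw z
  induction z using FreeAlgebra.induction with
  | grade0 r => rw [(Algebra.commute_algebraMap_right r w).lie_eq]; exact zero_mem _
  | grade1 i => exact lie_ι_mem_commIdeal hw i
  | mul z₁ z₂ h₁ h₂ =>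
    have leibniz : ⁅w, z₁ * z₂⁆ = z₂ * ⁅w, z₁⁆ + ⁅⁅w, z₁⁆, z₂⁆ + z₁ * ⁅w, z₂⁆ := by
      simp only [Ring.lie_def]; noncomm_ring
    rw [leibniz]
    exact add_mem (add_mem (Submodule.smul_mem _ z₂ h₁)
      (commIdeal_succ_le j (hC _ (lie_mem_rnComms hw z₁) z₂))) (Submodule.smul_mem _ z₁ h₂)
  | add z₁ z₂ h₁ h₂ => rw [lie_add]; exact add_mem h₁ h₂

theorem centralModulo (hn : n ≠ 0) (j : ℕ) : CentralModulo R n j :=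
  if hj : n ≤ j + 2 then centralModulo_of_le hn hj else (centralModulo hn (j + 1)).of_succ
termination_by n - j

theorem lie_mul_lie_mem_commIdeal (h2 : IsUnit (2 : R)) (hn : n ≠ 0) {j : ℕ} {u : F₂}
    (hu : u ∈ rnComms F₂ j) (a : F₂) (i : Fin 2) :
    ⁅u, a⁆ * ⁅a, ι R i⁆ ∈ commIdeal R n j := by
  have hC := centralModulo (R := R) hn j
  have hua := lie_mem_rnComms hu a
  have key : 2 * (⁅u, a⁆ * ⁅a, ι R i⁆) = ⁅⁅u, a * a⁆, ι R i⁆ - ⁅⁅u, a⁆, ι R i⁆ * a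
      - a * ⁅⁅u, a⁆, ι R i⁆ + ⁅⁅u, a⁆, ⁅a, ι R i⁆⁆ := by
    simp only [Ring.lie_def]; noncomm_ring
  have h2mem : 2 * (⁅u, a⁆ * ⁅a, ι R i⁆) ∈ commIdeal R n j := by
    rw [key]
    exact add_mem (sub_mem (sub_mem (lie_ι_mem_commIdeal (lie_mem_rnComms hu _) i)
      (hC.mul_mem (lie_ι_mem_commIdeal hua i) a))
      (Submodule.smul_mem _ a (lie_ι_mem_commIdeal hua i))) (hC _ hua _)
  obtain ⟨v, hv⟩ := h2
  have := Submodule.smul_mem _ (algebraMap R F₂ ↑v⁻¹) h2mem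
  rwa [smul_eq_mul, ← mul_assoc, ← map_ofNat (algebraMap R F₂) 2, ← hv, ← map_mul,
    Units.inv_mul, map_one, one_mul] at this

theorem lie_mul_comm_mem_commIdeal (h2 : IsUnit (2 : R)) (hn : n ≠ 0) {j : ℕ} {u : F₂}
    (hu : u ∈ rnComms F₂ j) (z : F₂) :
    ⁅u, z⁆ * ⁅x, y⁆ ∈ commIdeal R n j := by
  induction z using FreeAlgebra.induction with
  | grade0 r =>
    rw [(Algebra.commute_algebraMap_right r u).lie_eq, zero_mul]; exact zero_mem _
  | grade1 i =>
    match i with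
    | 0 => exact lie_mul_lie_mem_commIdeal h2 hn hu x 1
    | 1 => rw [← lie_skew x y, mul_neg, neg_mem_iff]; exact (lie_mul_lie_mem_commIdeal h2 hn hu y 0)
  | mul z₁ z₂ h₁ h₂ =>
    have hC := centralModulo (R := R) hn j
    have leibniz : ⁅u, z₁ * z₂⁆ * ⁅x, y⁆ = z₂ * (⁅u, z₁⁆ * ⁅x, y⁆)
        + ⁅⁅u, z₁⁆, z₂⁆ * ⁅x, y⁆ + z₁ * (⁅u, z₂⁆ * ⁅x, y⁆) := by
      simp only [Ring.lie_def]; noncomm_ring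
    rw [leibniz]
    exact add_mem (add_mem (Submodule.smul_mem _ z₂ h₁)
      (hC.mul_mem (hC _ (lie_mem_rnComms hu z₁) z₂) _)) (Submodule.smul_mem _ z₁ h₂)
  | add z₁ z₂ h₁ h₂ => rw [lie_add, add_mul]; exact add_mem h₁ h₂

theorem comm_mul_mem_commIdeal_succ (h2 : IsUnit (2 : R)) (hn : n ≠ 0) {j : ℕ} {v : F₂}
    (hv : v ∈ commIdeal R n j) : ⁅x, y⁆ * v ∈ commIdeal R n (j + 1) := by
  suffices ∀ a, ⁅x, y⁆ * (a * v) ∈ commIdeal R n (j + 1) by simpa using this 1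
  induction hv using Submodule.span_induction with
  | mem v hv =>
    intro a
    rcases hv with ⟨w, hw, i, rfl⟩ | hv
    · have hC := centralModulo (R := R) hn (j + 1)
      have key : ⁅x, y⁆ * (a * ⁅w, ι R i⁆)
          = ⁅w, ι R i⁆ * ⁅x, y⁆ * a - ⁅⁅w, ι R i⁆, ⁅x, y⁆ * a⁆ := by
        simp only [Ring.lie_def]; noncomm_ring
      rw [key]
      exact sub_mem (hC.mul_mem (lie_mul_comm_mem_commIdeal h2 hn hw _) a)
        (hC _ (lie_mem_rnComms hw _) _)
    · exact mem_commIdeal_of_mem_Tideal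
        (TwoSidedIdeal.mul_mem_left _ _ _ (TwoSidedIdeal.mul_mem_left _ _ _ hv))
  | zero => intro a; rw [mul_zero, mul_zero]; exact zero_mem _
  | add v₁ v₂ _ _ h₁ h₂ => intro a; rw [mul_add, mul_add]; exact add_mem (h₁ a) (h₂ a)
  | smul b v _ h => intro a; rw [smul_eq_mul, ← mul_assoc a b v]; exact h (a * b)

theorem comm_pow_mul_mem_commIdeal (h2 : IsUnit (2 : R)) (hn : n ≠ 0) (k : ℕ) {j : ℕ} {v : F₂}
    (hv : v ∈ commIdeal R n j) : ⁅x, y⁆ ^ k * v ∈ commIdeal R n (j + k) := by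
  induction k generalizing j v with
  | zero => simpa using hv
  | succ k ih =>
    rw [pow_succ, mul_assoc, ← add_assoc, add_right_comm]
    exact ih (comm_mul_mem_commIdeal_succ h2 hn hv)

theorem comm_pow_mem_Tideal (h2 : IsUnit (2 : R)) (hn : 3 ≤ n) :
    ⁅x, y⁆ ^ (n - 1) ∈ Tideal F₂ n := by
  have hsq : ⁅x, y⁆ * ⁅x, y⁆ ∈ commIdeal R n 0 :=
    lie_mul_comm_mem_commIdeal h2 (by omega) (mem_rnComms_zero _) _
  have := commIdeal_le_Tideal (by omega) (comm_pow_mul_mem_commIdeal h2 (by omega) (n - 3) hsq)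
  rwa [← mul_assoc, ← pow_succ, ← pow_succ, show n - 3 + 1 + 1 = n - 1 by omega] at this

end UpperBound

theorem comm_pow_not_mem_Tideal_general
    (K : Type*) [Field K] (h2 : (2 : K) ≠ 0)
    (n : ℕ) (hn : 3 ≤ n)
    (x y : FreeAlgebra K (Fin 2))
    (hx : x = FreeAlgebra.ι K 0) (hy : y = FreeAlgebra.ι K 1) :
    (x * y - y * x) ^ (n - 2) ∉ Tideal (FreeAlgebra K (Fin 2)) n ∧
    (x * y - y * x) ^ (n - 1) ∈ Tideal (FreeAlgebra K (Fin 2)) n := by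
  subst hx hy
  rw [← Ring.lie_def]
  refine ⟨?_, comm_pow_mem_Tideal h2.isUnit hn⟩
  obtain ⟨k, rfl⟩ : ∃ k, n = k + 2 := ⟨n - 2, by omega⟩
  simpa using comm_pow_not_mem_Tideal_add_two k

/-- **Corollary 2.** In the free associative unital algebra on two generators `x, y` over an
infinite field of characteristic `≠ 2, 3`, for `n ≥ 3` the power `[x, y]^(n-2)` does not
belong to `T⁽ⁿ⁾`, while `[x, y]^(n-1)` does; hence the nilpotency index of the commutator
of the free generators in `F₂ / T⁽ⁿ⁾` equals `n - 1`. -/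
theorem comm_pow_not_mem_Tideal
    (K : Type*) [Field K] [Infinite K] (h2 : (2 : K) ≠ 0) (h3 : (3 : K) ≠ 0)
    (n : ℕ) (hn : 3 ≤ n)
    (x y : FreeAlgebra K (Fin 2))
    (hx : x = FreeAlgebra.ι K 0) (hy : y = FreeAlgebra.ι K 1) :
    (x * y - y * x) ^ (n - 2) ∉ Tideal (FreeAlgebra K (Fin 2)) n ∧
    (x * y - y * x) ^ (n - 1) ∈ Tideal (FreeAlgebra K (Fin 2)) n :=
  comm_pow_not_mem_Tideal_general K h2 n hn x y hx hy
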